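/- Let U, V be d×d unitary matrices, |ψ⟩ a unit vector with f_V = |⟨ψ|U†V|ψ⟩|², and f_W ∈ [0,1]. Then the minimal phase-corrected Frobenius distance min over unitaries W with |⟨ψ|U†W|ψ⟩|² = f_W of min_ρ ‖V − e^{iρ}W‖_F equals √(4(1 − √(f_V f_W) − √((1−f_V)(1−f_W)))), which is also equal to √(4(1 − cos(γ_V − γ_W))) where γ_V = arccos(√f_V) and γ_W = arccos(√f_W). -/

import Mathlib

/-
Everything reduces to traces: for unitaries `V, W`, `min_ρ ‖V - e^{iρ} W‖_F² = 2d - 2 |tr (V†W)|`.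
With `Y = U†V` and `X = U†W` one has `V†W = Y†X`. A unitary `Z` satisfies
`|tr Z| ≤ d - 2 + 2 |⟨ψ|Z|ψ⟩|` (compute the trace in an orthonormal basis whose first two vectors
span `ψ` and `Zψ`), and `|⟨Yψ|Xψ⟩| ≤ cos γV cos γW + sin γV sin γW = cos (γV - γW)` is the
triangle inequality for angles between the unit vectors `ψ, Yψ, Xψ`. The bound is attained by
`W = U R Y`, where `R` rotates the plane of `ψ` and `Yψ` by `γW - γV`, so that
`|⟨ψ|U†W|ψ⟩| = cos γW` and `tr (V†W) = tr R = d - 2 + 2 cos (γV - γW)`.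
-/

open Matrix Complex

noncomputable def frobNorm {d : ℕ} (X : Matrix (Fin d) (Fin d) ℂ) : ℝ :=
  Real.sqrt ((Matrix.trace (Xᴴ * X)).re)

noncomputable def phaseDist {d : ℕ} (V W : Matrix (Fin d) (Fin d) ℂ) : ℝ :=
  ⨅ ρ : ℝ, frobNorm (V - Complex.exp (ρ * Complex.I) • W)

open scoped InnerProductSpace
open WithLp (toLp ofLp)

lemma exists_norm_eq_one_and_eq_norm_mul {𝕜 : Type*} [RCLike 𝕜] (a : 𝕜) :
    ∃ μ : 𝕜, ‖μ‖ = 1 ∧ a = ‖a‖ * μ := by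
  rcases eq_or_ne a 0 with rfl | ha
  · exact ⟨1, norm_one, by simp⟩
  · have ha' : (‖a‖ : 𝕜) ≠ 0 := RCLike.ofReal_ne_zero.mpr (norm_ne_zero_iff.mpr ha)
    exact ⟨a / ‖a‖, by simp [norm_div, ha], (mul_div_cancel₀ a ha').symm⟩

section InnerProductSpace

variable {𝕜 E : Type*} [RCLike 𝕜] [NormedAddCommGroup E] [InnerProductSpace 𝕜 E]

lemma inner_sub_inner_smul_eq_zero {p : E} (hp : ‖p‖ = 1) (x : E) :
    ⟪p, x - ⟪p, x⟫_𝕜 • p⟫_𝕜 = 0 := by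
  rw [inner_sub_right, inner_smul_right, inner_self_eq_norm_sq_to_K, hp]
  simp

lemma norm_sub_inner_smul_sq {p : E} (hp : ‖p‖ = 1) (x : E) :
    ‖x - ⟪p, x⟫_𝕜 • p‖ ^ 2 = ‖x‖ ^ 2 - ‖⟪p, x⟫_𝕜‖ ^ 2 := by
  have horth : ⟪x - ⟪p, x⟫_𝕜 • p, ⟪p, x⟫_𝕜 • p⟫_𝕜 = 0 := by
    rw [inner_smul_right, inner_eq_zero_symm.mp (inner_sub_inner_smul_eq_zero hp x), mul_zero]
  have h := norm_add_sq_eq_norm_sq_add_norm_sq_of_inner_eq_zero _ _ horth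
  rw [sub_add_cancel, norm_smul, hp, mul_one] at h
  linarith

/-- The triangle inequality for the angle `arccos ‖⟪u, v⟫‖` between unit vectors. -/
lemma norm_inner_le_of_norm_eq_one {p u v : E} (hp : ‖p‖ = 1) (hu : ‖u‖ = 1) (hv : ‖v‖ = 1) :
    ‖⟪u, v⟫_𝕜‖ ≤ ‖⟪p, u⟫_𝕜‖ * ‖⟪p, v⟫_𝕜‖
      + √(1 - ‖⟪p, u⟫_𝕜‖ ^ 2) * √(1 - ‖⟪p, v⟫_𝕜‖ ^ 2) := by
  set u' := u - ⟪p, u⟫_𝕜 • p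
  set v' := v - ⟪p, v⟫_𝕜 • p
  have hnorm {x : E} (hx : ‖x‖ = 1) : ‖x - ⟪p, x⟫_𝕜 • p‖ = √(1 - ‖⟪p, x⟫_𝕜‖ ^ 2) := by
    rw [← one_pow 2, ← hx, ← norm_sub_inner_smul_sq hp, Real.sqrt_sq (norm_nonneg _)]
  have hsplit : ⟪u, v⟫_𝕜 = starRingEnd 𝕜 ⟪p, u⟫_𝕜 * ⟪p, v⟫_𝕜 + ⟪u', v'⟫_𝕜 := by
    have hu' : ⟪u', p⟫_𝕜 = 0 := inner_eq_zero_symm.mp (inner_sub_inner_smul_eq_zero hp u)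
    have hv' : ⟪p, v'⟫_𝕜 = 0 := inner_sub_inner_smul_eq_zero hp v
    have hpp : ⟪p, p⟫_𝕜 = 1 := by rw [inner_self_eq_norm_sq_to_K, hp]; simp
    calc ⟪u, v⟫_𝕜 = ⟪u' + ⟪p, u⟫_𝕜 • p, v' + ⟪p, v⟫_𝕜 • p⟫_𝕜 := by simp [u', v']
      _ = _ := by
        simp only [inner_add_left, inner_add_right, inner_smul_left, inner_smul_right, hu', hv',
          hpp]
        ring
  calc ‖⟪u, v⟫_𝕜‖ ≤ ‖⟪p, u⟫_𝕜‖ * ‖⟪p, v⟫_𝕜‖ + ‖u'‖ * ‖v'‖ := by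
        rw [hsplit]
        refine (norm_add_le _ _).trans (add_le_add ?_ (norm_inner_le_norm _ _))
        rw [norm_mul, RCLike.norm_conj]
    _ = _ := by rw [hnorm hu, hnorm hv]

lemma exists_norm_eq_one_inner_eq_zero (hE : 2 ≤ Module.finrank 𝕜 E) (p : E) :
    ∃ φ : E, ‖φ‖ = 1 ∧ ⟪p, φ⟫_𝕜 = 0 := by
  have : FiniteDimensional 𝕜 E := Module.finite_of_finrank_pos (by omega)
  have hne : (𝕜 ∙ p)ᗮ ≠ ⊥ := by
    rw [Ne, Submodule.orthogonal_eq_bot_iff]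
    intro htop
    have := finrank_span_le_card (R := 𝕜) ({p} : Set E)
    rw [htop, finrank_top] at this
    simp at this
    omega
  obtain ⟨v, hv, hv0⟩ := Submodule.exists_mem_ne_zero_of_ne_bot hne
  refine ⟨(‖v‖⁻¹ : 𝕜) • v, norm_smul_inv_norm hv0, ?_⟩
  rw [inner_smul_right, Submodule.mem_orthogonal_singleton_iff_inner_right.mp hv, mul_zero]

lemma exists_eq_inner_smul_add_sqrt_smul (hE : 2 ≤ Module.finrank 𝕜 E) {p z : E}
    (hp : ‖p‖ = 1) (hz : ‖z‖ = 1) :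
    ∃ φ : E, ‖φ‖ = 1 ∧ ⟪p, φ⟫_𝕜 = 0 ∧
      z = ⟪p, z⟫_𝕜 • p + (√(1 - ‖⟪p, z⟫_𝕜‖ ^ 2) : 𝕜) • φ := by
  set r := z - ⟪p, z⟫_𝕜 • p
  have hr : ‖r‖ = √(1 - ‖⟪p, z⟫_𝕜‖ ^ 2) := by
    rw [← one_pow 2, ← hz, ← norm_sub_inner_smul_sq hp, Real.sqrt_sq (norm_nonneg _)]
  rcases eq_or_ne r 0 with hr0 | hr0
  · obtain ⟨φ, hφ, hpφ⟩ := exists_norm_eq_one_inner_eq_zero hE p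
    refine ⟨φ, hφ, hpφ, ?_⟩
    rw [← hr, hr0, norm_zero, RCLike.ofReal_zero, zero_smul, add_zero, ← sub_eq_zero]
    exact hr0
  · refine ⟨(‖r‖⁻¹ : 𝕜) • r, norm_smul_inv_norm hr0, ?_, ?_⟩
    · rw [inner_smul_right, inner_sub_inner_smul_eq_zero hp, mul_zero]
    · rw [← hr, smul_smul, ← RCLike.ofReal_inv, ← RCLike.ofReal_mul,
        mul_inv_cancel₀ (norm_ne_zero_iff.mpr hr0), RCLike.ofReal_one, one_smul,
        add_sub_cancel]

lemma orthonormal_pair {p φ : E} (hp : ‖p‖ = 1) (hφ : ‖φ‖ = 1) (hpφ : ⟪p, φ⟫_𝕜 = 0) :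
    Orthonormal 𝕜 ![p, φ] := by
  rw [orthonormal_iff_ite]
  simp [Fin.forall_fin_two, inner_self_eq_norm_sq_to_K, hp, hφ, hpφ, inner_eq_zero_symm.mp hpφ]

/-- `T φ ⟂ T p` forces `‖s‖ ‖⟪φ, T φ⟫‖ = ‖a‖ ‖⟪p, T φ⟫‖`, and Bessel's inequality for `T φ`
then bounds `‖⟪φ, T φ⟫‖` by `‖a‖`. -/
lemma LinearIsometry.norm_inner_apply_le_of_apply_eq (T : E →ₗᵢ[𝕜] E) {p φ : E} (hp : ‖p‖ = 1)
    (hφ : ‖φ‖ = 1) (hpφ : ⟪p, φ⟫_𝕜 = 0) {a s : 𝕜} (hTp : T p = a • p + s • φ) :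
    ‖⟪φ, T φ⟫_𝕜‖ ≤ ‖a‖ := by
  set b := ⟪p, T φ⟫_𝕜
  set t := ⟪φ, T φ⟫_𝕜
  have horth : starRingEnd 𝕜 a * b + starRingEnd 𝕜 s * t = 0 := by
    rw [← hpφ, ← T.inner_map_map, hTp, inner_add_left, inner_smul_left, inner_smul_left]
  have hnorm : ‖s‖ * ‖t‖ = ‖a‖ * ‖b‖ := by
    have h := congrArg norm (eq_neg_of_add_eq_zero_left horth)
    rwa [norm_neg, norm_mul, norm_mul, RCLike.norm_conj, RCLike.norm_conj, eq_comm] at h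
  have hunit : ‖a‖ ^ 2 + ‖s‖ ^ 2 = 1 := by
    have hpyth := norm_add_sq_eq_norm_sq_add_norm_sq_of_inner_eq_zero (a • p) (s • φ)
      (by rw [inner_smul_left, inner_smul_right, hpφ, mul_zero, mul_zero])
    rw [← hTp, T.norm_map, norm_smul, norm_smul, hp, hφ] at hpyth
    linear_combination -hpyth
  have hbessel : ‖b‖ ^ 2 + ‖t‖ ^ 2 ≤ 1 := by
    have := (orthonormal_pair hp hφ hpφ).sum_inner_products_le (x := T φ) (s := Finset.univ)
    simpa [Fin.sum_univ_two, T.norm_map, hφ] using this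
  have ht : ‖t‖ ^ 2 ≤ ‖a‖ ^ 2 := by
    have key : ‖t‖ ^ 2 * (‖a‖ ^ 2 + ‖s‖ ^ 2) = ‖a‖ ^ 2 * (‖b‖ ^ 2 + ‖t‖ ^ 2) := by
      linear_combination congrArg (· ^ 2) hnorm
    rw [hunit] at key
    nlinarith [mul_le_mul_of_nonneg_left hbessel (sq_nonneg ‖a‖)]
  exact pow_le_pow_iff_left₀ (norm_nonneg _) (norm_nonneg _) two_ne_zero |>.mp ht

lemma exists_orthonormalBasis_apply_zero_apply_one (hE : 2 ≤ Module.finrank 𝕜 E) {p φ : E}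
    (hp : ‖p‖ = 1) (hφ : ‖φ‖ = 1) (hpφ : ⟪p, φ⟫_𝕜 = 0) :
    ∃ b : OrthonormalBasis (Fin (Module.finrank 𝕜 E)) 𝕜 E,
      b ⟨0, by omega⟩ = p ∧ b ⟨1, by omega⟩ = φ := by
  have : FiniteDimensional 𝕜 E := Module.finite_of_finrank_pos (by omega)
  set n := Module.finrank 𝕜 E
  let i₀ : Fin n := ⟨0, by omega⟩
  let i₁ : Fin n := ⟨1, by omega⟩
  have hi : i₀ ≠ i₁ := by simp [i₀, i₁, Fin.ext_iff]
  obtain ⟨b, hb⟩ := Orthonormal.exists_orthonormalBasis_extension_of_card_eq (𝕜 := 𝕜)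
    (ι := Fin n) (by simp [n]) (v := fun i => if i = i₀ then p else φ) (s := {i₀, i₁}) (by
      rw [orthonormal_iff_ite]
      rintro ⟨i, hi'⟩ ⟨j, hj'⟩
      simp only [Set.mem_insert_iff, Set.mem_singleton_iff] at hi' hj'
      rcases hi' with rfl | rfl <;> rcases hj' with rfl | rfl <;>
        simp [Set.domRestrict, hi, hi.symm, inner_self_eq_norm_sq_to_K, hp, hφ, hpφ,
          inner_eq_zero_symm.mp hpφ])
  exact ⟨b, by simpa using hb i₀ (by simp), by simpa [hi.symm] using hb i₁ (by simp)⟩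

lemma sum_le_card_sub_two_add {ι : Type*} [Fintype ι] {f : ι → ℝ} (hf : ∀ i, f i ≤ 1) {i j : ι}
    (hij : i ≠ j) : ∑ k, f k ≤ Fintype.card ι - 2 + f i + f j := by
  classical
  have hpair : (1 - f i) + (1 - f j) ≤ ∑ k, (1 - f k) := by
    rw [← Finset.sum_pair (f := fun k => 1 - f k) hij]
    exact Finset.sum_le_sum_of_subset_of_nonneg (Finset.subset_univ _)
      fun k _ _ => sub_nonneg.2 (hf k)
  simp only [Finset.sum_sub_distrib, Finset.sum_const, Finset.card_univ, nsmul_eq_mul,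
    mul_one] at hpair
  linarith

/-- Computed in an orthonormal basis starting with `p` and a unit vector `φ` such that
`T p ∈ span {p, φ}`, the first two diagonal entries of `T` are at most `‖⟪p, T p⟫‖` and the others
at most `1`. -/
lemma LinearIsometry.norm_trace_le (T : E →ₗᵢ[𝕜] E) (hE : 2 ≤ Module.finrank 𝕜 E) {p : E}
    (hp : ‖p‖ = 1) :
    ‖LinearMap.trace 𝕜 E T.toLinearMap‖ ≤ Module.finrank 𝕜 E - 2 + 2 * ‖⟪p, T p⟫_𝕜‖ := by
  obtain ⟨φ, hφ, hpφ, hTp⟩ := exists_eq_inner_smul_add_sqrt_smul hE hp ((T.norm_map p).trans hp)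
  obtain ⟨b, hb₀, hb₁⟩ := exists_orthonormalBasis_apply_zero_apply_one hE hp hφ hpφ
  set f := fun i => ‖⟪b i, T (b i)⟫_𝕜‖
  have hf (i) : f i ≤ 1 := by
    simpa [T.norm_map, b.norm_eq_one] using norm_inner_le_norm (𝕜 := 𝕜) (b i) (T (b i))
  have hf₁ : f ⟨1, by omega⟩ ≤ ‖⟪p, T p⟫_𝕜‖ := by
    simpa only [f, hb₁] using T.norm_inner_apply_le_of_apply_eq hp hφ hpφ hTp
  have hsum := sum_le_card_sub_two_add hf (i := ⟨0, by omega⟩) (j := ⟨1, by omega⟩)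
    (by simp [Fin.ext_iff])
  simp only [f, hb₀, Fintype.card_fin] at hsum hf₁
  calc ‖LinearMap.trace 𝕜 E T.toLinearMap‖ = ‖∑ i, ⟪b i, T (b i)⟫_𝕜‖ := by
        rw [LinearMap.trace_eq_sum_inner _ b]; rfl
    _ ≤ ∑ i, f i := norm_sum_le _ _
    _ ≤ _ := by linarith

end InnerProductSpace

namespace Matrix

variable {𝕜 n : Type*} [RCLike 𝕜] [Fintype n]

lemma star_dotProduct_eq_inner (x y : n → 𝕜) :
    star x ⬝ᵥ y = ⟪(toLp 2 x : EuclideanSpace 𝕜 n), toLp 2 y⟫_𝕜 := by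
  rw [EuclideanSpace.inner_toLp_toLp, dotProduct_comm]

lemma norm_toLp_eq_one_iff (x : n → 𝕜) :
    ‖(toLp 2 x : EuclideanSpace 𝕜 n)‖ = 1 ↔ star x ⬝ᵥ x = 1 := by
  rw [star_dotProduct_eq_inner, inner_self_eq_norm_sq_to_K]
  norm_cast
  exact (pow_eq_one_iff_of_nonneg (norm_nonneg _) two_ne_zero).symm

lemma exists_eq_star_dotProduct_smul_add (hn : 2 ≤ Fintype.card n) {ψ z : n → 𝕜}
    (hψ : star ψ ⬝ᵥ ψ = 1) (hz : star z ⬝ᵥ z = 1) :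
    ∃ χ : n → 𝕜, star χ ⬝ᵥ χ = 1 ∧ star ψ ⬝ᵥ χ = 0 ∧
      z = (star ψ ⬝ᵥ z) • ψ + (√(1 - ‖star ψ ⬝ᵥ z‖ ^ 2) : 𝕜) • χ := by
  obtain ⟨φ, hφ, hψφ, hz'⟩ := exists_eq_inner_smul_add_sqrt_smul (𝕜 := 𝕜) (by simpa using hn)
    ((norm_toLp_eq_one_iff ψ).2 hψ) ((norm_toLp_eq_one_iff z).2 hz)
  refine ⟨ofLp φ, (norm_toLp_eq_one_iff _).1 hφ, by rwa [star_dotProduct_eq_inner], ?_⟩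
  rw [star_dotProduct_eq_inner]
  exact congrArg ofLp hz'

variable [DecidableEq n]

lemma star_mulVec_dotProduct_mulVec {A : Matrix n n 𝕜} (hA : A ∈ unitaryGroup n 𝕜)
    (x y : n → 𝕜) : star (A *ᵥ x) ⬝ᵥ A *ᵥ y = star x ⬝ᵥ y := by
  rw [star_mulVec, dotProduct_mulVec, vecMul_vecMul, ← star_eq_conjTranspose,
    (mem_unitaryGroup_iff').mp hA, vecMul_one]

noncomputable def toEuclideanIsometry {A : Matrix n n 𝕜} (hA : A ∈ unitaryGroup n 𝕜) :
    EuclideanSpace 𝕜 n →ₗᵢ[𝕜] EuclideanSpace 𝕜 n :=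
  (toLpLin 2 2 A).isometryOfInner fun x y => by
    simp only [toLpLin_apply, ← star_dotProduct_eq_inner, star_mulVec_dotProduct_mulVec hA]
    exact star_dotProduct_eq_inner _ _

lemma trace_toLpLin (p : ENNReal) (A : Matrix n n 𝕜) :
    LinearMap.trace 𝕜 _ (toLpLin p p A) = trace A := by
  rw [toLpLin_eq_toLin, LinearMap.trace_eq_matrix_trace _ (PiLp.basisFun p 𝕜 n),
    LinearMap.toMatrix_toLin]

lemma norm_trace_le_of_mem_unitaryGroup (hn : 2 ≤ Fintype.card n) {A : Matrix n n 𝕜}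
    (hA : A ∈ unitaryGroup n 𝕜) {ψ : n → 𝕜} (hψ : star ψ ⬝ᵥ ψ = 1) :
    ‖trace A‖ ≤ Fintype.card n - 2 + 2 * ‖star ψ ⬝ᵥ A *ᵥ ψ‖ := by
  have h := (toEuclideanIsometry hA).norm_trace_le (by simpa using hn)
    ((norm_toLp_eq_one_iff ψ).2 hψ)
  simpa [toEuclideanIsometry, trace_toLpLin, star_dotProduct_eq_inner] using h

lemma norm_star_dotProduct_conjTranspose_mul_mulVec_le {A B : Matrix n n 𝕜}
    (hA : A ∈ unitaryGroup n 𝕜) (hB : B ∈ unitaryGroup n 𝕜) {ψ : n → 𝕜}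
    (hψ : star ψ ⬝ᵥ ψ = 1) :
    ‖star ψ ⬝ᵥ (Aᴴ * B) *ᵥ ψ‖ ≤ ‖star ψ ⬝ᵥ A *ᵥ ψ‖ * ‖star ψ ⬝ᵥ B *ᵥ ψ‖
      + √(1 - ‖star ψ ⬝ᵥ A *ᵥ ψ‖ ^ 2) * √(1 - ‖star ψ ⬝ᵥ B *ᵥ ψ‖ ^ 2) := by
  have hunit {C : Matrix n n 𝕜} (hC : C ∈ unitaryGroup n 𝕜) :
      ‖(toLp 2 (C *ᵥ ψ) : EuclideanSpace 𝕜 n)‖ = 1 :=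
    (norm_toLp_eq_one_iff _).2 (by rw [star_mulVec_dotProduct_mulVec hC, hψ])
  have h := norm_inner_le_of_norm_eq_one (𝕜 := 𝕜) ((norm_toLp_eq_one_iff ψ).2 hψ) (hunit hA)
    (hunit hB)
  rw [← mulVec_mulVec, dotProduct_mulVec, ← star_mulVec]
  simpa only [star_dotProduct_eq_inner] using h

lemma norm_star_dotProduct_mulVec_le_one {A : Matrix n n 𝕜} (hA : A ∈ unitaryGroup n 𝕜)
    {ψ : n → 𝕜} (hψ : star ψ ⬝ᵥ ψ = 1) : ‖star ψ ⬝ᵥ A *ᵥ ψ‖ ≤ 1 := by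
  have hp := (norm_toLp_eq_one_iff ψ).2 hψ
  have hAp := (norm_toLp_eq_one_iff (A *ᵥ ψ)).2 (by rw [star_mulVec_dotProduct_mulVec hA, hψ])
  simpa [star_dotProduct_eq_inner, hp, hAp] using
    norm_inner_le_norm (𝕜 := 𝕜) (toLp 2 ψ : EuclideanSpace 𝕜 n) (toLp 2 (A *ᵥ ψ))

lemma conjTranspose_mul_conjTranspose_mul {U : Matrix n n 𝕜} (hU : U ∈ unitaryGroup n 𝕜)
    (V W : Matrix n n 𝕜) : (Uᴴ * V)ᴴ * (Uᴴ * W) = Vᴴ * W := by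
  have hUU : U * Uᴴ = 1 := mem_unitaryGroup_iff.mp hU
  rw [conjTranspose_mul, conjTranspose_conjTranspose, mul_assoc, ← mul_assoc U, hUU, one_mul]

section PlaneRotation

noncomputable def planeRotation (e₁ e₂ : n → 𝕜) (δ : ℝ) : Matrix n n 𝕜 :=
  1 + ((Real.cos δ : 𝕜) - 1) • (vecMulVec e₁ (star e₁) + vecMulVec e₂ (star e₂))
    + (Real.sin δ : 𝕜) • (vecMulVec e₂ (star e₁) - vecMulVec e₁ (star e₂))

variable {e₁ e₂ : n → 𝕜}

lemma planeRotation_mulVec (h₁ : star e₁ ⬝ᵥ e₁ = 1) (h₂ : star e₂ ⬝ᵥ e₂ = 1)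
    (h₁₂ : star e₁ ⬝ᵥ e₂ = 0) (δ θ : ℝ) :
    planeRotation e₁ e₂ δ *ᵥ ((Real.cos θ : 𝕜) • e₁ + (Real.sin θ : 𝕜) • e₂)
      = (Real.cos (θ + δ) : 𝕜) • e₁ + (Real.sin (θ + δ) : 𝕜) • e₂ := by
  have h₂₁ : star e₂ ⬝ᵥ e₁ = 0 := by rw [star_dotProduct, h₁₂, star_zero]
  simp only [planeRotation, add_mulVec, sub_mulVec, smul_mulVec, one_mulVec, vecMulVec_mulVec,
    dotProduct_add, dotProduct_smul, h₁, h₂, h₁₂, h₂₁, smul_eq_mul, op_smul_eq_smul,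
    Real.cos_add, Real.sin_add]
  push_cast
  module

/-- With `P` the projection onto the plane and `J` its quarter turn, `P * P = P`,
`P * J = J * P = J` and `J * J = -P`, so the product collapses to
`1 + (cos² δ + sin² δ - 1) • P`. -/
lemma planeRotation_mem_unitaryGroup (h₁ : star e₁ ⬝ᵥ e₁ = 1) (h₂ : star e₂ ⬝ᵥ e₂ = 1)
    (h₁₂ : star e₁ ⬝ᵥ e₂ = 0) (δ : ℝ) : planeRotation e₁ e₂ δ ∈ unitaryGroup n 𝕜 := by
  have h₂₁ : star e₂ ⬝ᵥ e₁ = 0 := by rw [star_dotProduct, h₁₂, star_zero]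
  rw [mem_unitaryGroup_iff', planeRotation]
  set P := vecMulVec e₁ (star e₁) + vecMulVec e₂ (star e₂)
  set J := vecMulVec e₂ (star e₁) - vecMulVec e₁ (star e₂)
  have hPP : P * P = P := by
    simp [P, add_mul, mul_add, vecMulVec_mul_vecMulVec, h₁, h₂, h₁₂, h₂₁]
  have hPJ : P * J = J := by
    simp [P, J, add_mul, mul_sub, vecMulVec_mul_vecMulVec, h₁, h₂, h₁₂, h₂₁]
  have hJP : J * P = J := by
    simp [P, J, sub_mul, mul_add, vecMulVec_mul_vecMulVec, h₁, h₂, h₁₂, h₂₁]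
    abel
  have hJJ : J * J = -P := by
    simp [P, J, sub_mul, mul_sub, vecMulVec_mul_vecMulVec, h₁, h₂, h₁₂, h₂₁]
    abel
  have hPstar : star P = P := by simp [P, star_eq_conjTranspose]
  have hJstar : star J = -J := by simp [J, star_eq_conjTranspose]
  have htrig : (Real.cos δ : 𝕜) ^ 2 + (Real.sin δ : 𝕜) ^ 2 = 1 := by
    exact_mod_cast Real.cos_sq_add_sin_sq δ
  simp only [star_add, star_smul, star_one, hPstar, hJstar, star_sub, RCLike.star_def,
    RCLike.conj_ofReal, add_mul, mul_add, mul_smul_comm, smul_mul_assoc, one_mul, mul_one, hPP,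
    hPJ, hJP, hJJ, smul_neg, neg_mul]
  match_scalars <;> first | ring1 | linear_combination htrig

lemma trace_planeRotation (h₁ : star e₁ ⬝ᵥ e₁ = 1) (h₂ : star e₂ ⬝ᵥ e₂ = 1)
    (h₁₂ : star e₁ ⬝ᵥ e₂ = 0) (δ : ℝ) :
    trace (planeRotation e₁ e₂ δ) = ((Fintype.card n - 2 + 2 * Real.cos δ : ℝ) : 𝕜) := by
  have h₂₁ : star e₂ ⬝ᵥ e₁ = 0 := by rw [star_dotProduct, h₁₂, star_zero]
  simp [planeRotation, trace_vecMulVec, dotProduct_comm _ (star _), h₁, h₂, h₁₂, h₂₁]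
  push_cast
  ring

end PlaneRotation

lemma exists_mem_unitaryGroup_norm_star_dotProduct_mul_mulVec (hn : 2 ≤ Fintype.card n)
    {Y : Matrix n n 𝕜} (hY : Y ∈ unitaryGroup n 𝕜) {ψ : n → 𝕜} (hψ : star ψ ⬝ᵥ ψ = 1) {γ : ℝ}
    (hγ : ‖star ψ ⬝ᵥ Y *ᵥ ψ‖ = Real.cos γ) (hsin : 0 ≤ Real.sin γ) (δ : ℝ) :
    ∃ S ∈ unitaryGroup n 𝕜, ‖star ψ ⬝ᵥ (S * Y) *ᵥ ψ‖ = |Real.cos (γ + δ)| ∧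
      trace S = ((Fintype.card n - 2 + 2 * Real.cos δ : ℝ) : 𝕜) := by
  obtain ⟨χ, hχ, hψχ, hYψ⟩ := exists_eq_star_dotProduct_smul_add hn hψ
    (by rw [star_mulVec_dotProduct_mulVec hY, hψ] : star (Y *ᵥ ψ) ⬝ᵥ Y *ᵥ ψ = 1)
  obtain ⟨μ, hμ, hα⟩ := exists_norm_eq_one_and_eq_norm_mul (star ψ ⬝ᵥ Y *ᵥ ψ)
  have hsinγ : √(1 - ‖star ψ ⬝ᵥ Y *ᵥ ψ‖ ^ 2) = Real.sin γ := by
    rw [hγ, ← Real.abs_sin_eq_sqrt_one_sub_cos_sq, abs_of_nonneg hsin]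
  rw [hsinγ, hα, hγ] at hYψ
  set e₁ := μ • ψ
  have h₁ : star e₁ ⬝ᵥ e₁ = 1 := by
    rw [star_smul, smul_dotProduct, dotProduct_smul, hψ, smul_eq_mul, smul_eq_mul, mul_one,
      RCLike.star_def, RCLike.conj_mul, hμ]
    simp
  have h₁₂ : star e₁ ⬝ᵥ χ = 0 := by rw [star_smul, smul_dotProduct, hψχ, smul_zero]
  have hYψ' : Y *ᵥ ψ = (Real.cos γ : 𝕜) • e₁ + (Real.sin γ : 𝕜) • χ := by
    rw [hYψ, mul_smul]
  refine ⟨planeRotation e₁ χ δ, planeRotation_mem_unitaryGroup h₁ hχ h₁₂ δ, ?_,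
    trace_planeRotation h₁ hχ h₁₂ δ⟩
  rw [← mulVec_mulVec, hYψ', planeRotation_mulVec h₁ hχ h₁₂, dotProduct_add, dotProduct_smul,
    dotProduct_smul, dotProduct_smul, hψ, hψχ]
  simp [hμ]

end Matrix

section PhaseDistance

variable {d : ℕ} {U V W : Matrix (Fin d) (Fin d) ℂ}

lemma frobNorm_sub_smul (hV : V ∈ unitaryGroup (Fin d) ℂ) (hW : W ∈ unitaryGroup (Fin d) ℂ)
    {z : ℂ} (hz : ‖z‖ = 1) :
    frobNorm (V - z • W) = √(2 * d - 2 * (z * trace (Vᴴ * W)).re) := by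
  simp only [frobNorm, ← star_eq_conjTranspose]
  have hWV : trace (star W * V) = star (trace (star V * W)) := by
    rw [star_eq_conjTranspose, star_eq_conjTranspose, ← trace_conjTranspose, conjTranspose_mul,
      conjTranspose_conjTranspose]
  have hzz : star z * z = 1 := by
    rw [Complex.star_def, Complex.conj_mul', hz]
    simp
  have htr : trace (star (V - z • W) * (V - z • W))
      = 2 * d - (z * trace (star V * W) + star (z * trace (star V * W))) := by
    simp only [star_sub, star_smul, sub_mul, mul_sub, smul_mul_assoc, mul_smul_comm,
      mem_unitaryGroup_iff'.mp hV, mem_unitaryGroup_iff'.mp hW, trace_sub, trace_smul, trace_one,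
      hWV, star_mul', Fintype.card_fin, smul_eq_mul]
    linear_combination (d : ℂ) * hzz
  rw [htr, Complex.sub_re, Complex.add_re, Complex.star_def, Complex.conj_re, two_mul, two_mul,
    two_mul]
  norm_cast

lemma phaseDist_eq_sqrt_norm_trace (hV : V ∈ unitaryGroup (Fin d) ℂ)
    (hW : W ∈ unitaryGroup (Fin d) ℂ) :
    phaseDist V W = √(2 * d - 2 * ‖trace (Vᴴ * W)‖) := by
  set t := trace (Vᴴ * W)
  have hρ (ρ : ℝ) : frobNorm (V - exp (ρ * I) • W) = √(2 * d - 2 * (exp (ρ * I) * t).re) :=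
    frobNorm_sub_smul hV hW (norm_exp_ofReal_mul_I ρ)
  simp only [phaseDist, hρ]
  refine le_antisymm ((ciInf_le ⟨0, ?_⟩ (-t.arg)).trans_eq ?_) (le_ciInf fun ρ => ?_)
  · rintro _ ⟨ρ, rfl⟩
    exact Real.sqrt_nonneg _
  · have hrot : exp ((-t.arg : ℝ) * I) * t = ‖t‖ := by
      nth_rewrite 2 [← norm_mul_exp_arg_mul_I t]
      rw [mul_left_comm, ← Complex.exp_add, Complex.ofReal_neg, neg_mul, neg_add_cancel,
        Complex.exp_zero, mul_one]
    rw [hrot, Complex.ofReal_re]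
  · refine Real.sqrt_le_sqrt ?_
    have := Complex.re_le_norm (exp (ρ * I) * t)
    rw [norm_mul, norm_exp_ofReal_mul_I, one_mul] at this
    linarith

lemma le_phaseDist (hd : 2 ≤ d) (hU : U ∈ unitaryGroup (Fin d) ℂ)
    (hV : V ∈ unitaryGroup (Fin d) ℂ) (hW : W ∈ unitaryGroup (Fin d) ℂ) {ψ : Fin d → ℂ}
    (hψ : star ψ ⬝ᵥ ψ = 1) :
    √(4 * (1 - (‖star ψ ⬝ᵥ (Uᴴ * V) *ᵥ ψ‖ * ‖star ψ ⬝ᵥ (Uᴴ * W) *ᵥ ψ‖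
      + √(1 - ‖star ψ ⬝ᵥ (Uᴴ * V) *ᵥ ψ‖ ^ 2) * √(1 - ‖star ψ ⬝ᵥ (Uᴴ * W) *ᵥ ψ‖ ^ 2))))
      ≤ phaseDist V W := by
  have hUV : Uᴴ * V ∈ unitaryGroup (Fin d) ℂ := mul_mem (Unitary.star_mem hU) hV
  have hUW : Uᴴ * W ∈ unitaryGroup (Fin d) ℂ := mul_mem (Unitary.star_mem hU) hW
  have hVW : Vᴴ * W ∈ unitaryGroup (Fin d) ℂ := mul_mem (Unitary.star_mem hV) hW
  have htr := norm_trace_le_of_mem_unitaryGroup (by simpa using hd) hVW hψ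
  have hfid := norm_star_dotProduct_conjTranspose_mul_mulVec_le hUV hUW hψ
  rw [conjTranspose_mul_conjTranspose_mul hU] at hfid
  rw [phaseDist_eq_sqrt_norm_trace hV hW]
  refine Real.sqrt_le_sqrt ?_
  rw [Fintype.card_fin] at htr
  linarith

lemma exists_mem_unitaryGroup_phaseDist_eq (hd : 2 ≤ d) (hU : U ∈ unitaryGroup (Fin d) ℂ)
    (hV : V ∈ unitaryGroup (Fin d) ℂ) {ψ : Fin d → ℂ} (hψ : star ψ ⬝ᵥ ψ = 1) {γ δ : ℝ}
    (hγ : ‖star ψ ⬝ᵥ (Uᴴ * V) *ᵥ ψ‖ = Real.cos γ) (hsin : 0 ≤ Real.sin γ)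
    (hcos : 0 ≤ Real.cos δ) :
    ∃ W ∈ unitaryGroup (Fin d) ℂ, ‖star ψ ⬝ᵥ (Uᴴ * W) *ᵥ ψ‖ = |Real.cos (γ + δ)| ∧
      phaseDist V W = √(4 * (1 - Real.cos δ)) := by
  have hY : Uᴴ * V ∈ unitaryGroup (Fin d) ℂ := mul_mem (Unitary.star_mem hU) hV
  obtain ⟨S, hS, hfid, htr⟩ :=
    exists_mem_unitaryGroup_norm_star_dotProduct_mul_mulVec (by simpa using hd) hY hψ hγ hsin δ
  have hUU : Uᴴ * U = 1 := mem_unitaryGroup_iff'.mp hU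
  have hYY : Uᴴ * V * (Uᴴ * V)ᴴ = 1 := mem_unitaryGroup_iff.mp hY
  have hUW : Uᴴ * (U * (S * (Uᴴ * V))) = S * (Uᴴ * V) := by rw [← mul_assoc, hUU, one_mul]
  refine ⟨U * (S * (Uᴴ * V)), mul_mem hU (mul_mem hS hY), by rwa [hUW], ?_⟩
  have hnorm : ‖trace (Vᴴ * (U * (S * (Uᴴ * V))))‖ = d - 2 + 2 * Real.cos δ := by
    rw [← conjTranspose_mul_conjTranspose_mul hU, hUW, ← mul_assoc, trace_mul_comm, ← mul_assoc,
      hYY, one_mul, htr, RCLike.norm_ofReal, Fintype.card_fin, abs_of_nonneg]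
    have h2 : (2 : ℝ) ≤ d := by exact_mod_cast hd
    linarith
  rw [phaseDist_eq_sqrt_norm_trace hV (mul_mem hU (mul_mem hS hY)), hnorm]
  ring_nf

end PhaseDistance

lemma cos_arccos_sqrt {t : ℝ} (ht : t ≤ 1) : Real.cos (Real.arccos √t) = √t :=
  Real.cos_arccos (by linarith [Real.sqrt_nonneg t]) (Real.sqrt_le_one.mpr ht)

lemma cos_arccos_sqrt_sub_arccos_sqrt {x y : ℝ} (hx₀ : 0 ≤ x) (hx₁ : x ≤ 1) (hy₀ : 0 ≤ y)
    (hy₁ : y ≤ 1) :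
    Real.cos (Real.arccos √x - Real.arccos √y) = √(x * y) + √((1 - x) * (1 - y)) := by
  rw [Real.cos_sub, cos_arccos_sqrt hx₁, cos_arccos_sqrt hy₁, Real.sin_arccos, Real.sin_arccos,
    Real.sq_sqrt hx₀, Real.sq_sqrt hy₀, Real.sqrt_mul hx₀, Real.sqrt_mul (sub_nonneg.2 hx₁)]

theorem min_dist_fixed_fidelity_separable {d : ℕ} (hd : 2 ≤ d)
    (U V : Matrix (Fin d) (Fin d) ℂ)
    (hU : U ∈ Matrix.unitaryGroup (Fin d) ℂ)
    (hV : V ∈ Matrix.unitaryGroup (Fin d) ℂ)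
    (ψ : Fin d → ℂ) (hψ : star ψ ⬝ᵥ ψ = 1)
    (fV : ℝ) (hfV : fV = ‖star ψ ⬝ᵥ (Uᴴ * V).mulVec ψ‖ ^ 2)
    (fW : ℝ) (hfW0 : 0 ≤ fW) (hfW1 : fW ≤ 1)
    (γV γW : ℝ) (hγV : γV = Real.arccos (Real.sqrt fV))
    (hγW : γW = Real.arccos (Real.sqrt fW)) :
    IsLeast {r : ℝ | ∃ W ∈ Matrix.unitaryGroup (Fin d) ℂ,
        ‖star ψ ⬝ᵥ (Uᴴ * W).mulVec ψ‖ ^ 2 = fW ∧ r = phaseDist V W}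
      (Real.sqrt (4 * (1 - Real.sqrt (fV * fW) - Real.sqrt ((1 - fV) * (1 - fW)))))
    ∧ Real.sqrt (4 * (1 - Real.sqrt (fV * fW) - Real.sqrt ((1 - fV) * (1 - fW))))
      = Real.sqrt (4 * (1 - Real.cos (γV - γW))) := by
  have hfV0 : 0 ≤ fV := hfV ▸ sq_nonneg _
  have hfV1 : fV ≤ 1 := hfV ▸ pow_le_one₀ (norm_nonneg _)
    (norm_star_dotProduct_mulVec_le_one (mul_mem (Unitary.star_mem hU) hV) hψ)
  have hnormV : ‖star ψ ⬝ᵥ (Uᴴ * V) *ᵥ ψ‖ = √fV := by rw [hfV, Real.sqrt_sq (norm_nonneg _)]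
  have hcos : Real.cos (γV - γW) = √(fV * fW) + √((1 - fV) * (1 - fW)) :=
    hγV ▸ hγW ▸ cos_arccos_sqrt_sub_arccos_sqrt hfV0 hfV1 hfW0 hfW1
  have hvalue : √(4 * (1 - √(fV * fW) - √((1 - fV) * (1 - fW))))
      = √(4 * (1 - Real.cos (γV - γW))) := by rw [hcos, sub_sub]
  refine ⟨⟨?_, ?_⟩, hvalue⟩
  · obtain ⟨W, hW, hfid, hdist⟩ := exists_mem_unitaryGroup_phaseDist_eq hd hU hV hψ
      (γ := γV) (δ := γW - γV) (by rw [hnormV, hγV, cos_arccos_sqrt hfV1])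
      (hγV ▸ Real.sin_nonneg_of_nonneg_of_le_pi (Real.arccos_nonneg _) (Real.arccos_le_pi _))
      (by rw [← Real.cos_neg, neg_sub, hcos]; positivity)
    refine ⟨W, hW, ?_, ?_⟩
    · rw [hfid, add_sub_cancel, sq_abs, hγW, cos_arccos_sqrt hfW1, Real.sq_sqrt hfW0]
    · rw [hdist, hvalue, ← Real.cos_neg, neg_sub]
  · rintro r ⟨W, hW, hfid, rfl⟩
    have hnormW : ‖star ψ ⬝ᵥ (Uᴴ * W) *ᵥ ψ‖ = √fW := by rw [← hfid, Real.sqrt_sq (norm_nonneg _)]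
    have hle := le_phaseDist hd hU hV hW hψ
    rwa [hnormV, hnormW, Real.sq_sqrt hfV0, Real.sq_sqrt hfW0, ← Real.sqrt_mul hfV0,
      ← Real.sqrt_mul (sub_nonneg.2 hfV1), ← sub_sub] at hle
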